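/- arXiv:1406.3008 — 7 statements merged into one kernel-verified Lean document; each statement's English description precedes it below -/
import Mathlib

section
/- The Jacobi triple product identity: for |q|<1 and y nonzero, the infinite product ∏_{k≥1} (1-q^{2k})(1+q^{2k-1}y^2)(1+q^{2k-1}y^{-2}) equals the sum ∑_{k∈ℤ} q^{k^2} y^{2k}. -/
/-!
Writing `w = y²`, reflecting the factors of the second kind turns the finite product
`∏_{j<n} (1 + q^{2j+1} w)(1 + q^{2j+1} w⁻¹)` into `w⁻ⁿ q^{n²} ∏_{t<2n} (1 + w q^{2t+1-2n})`, which
the `q`-binomial theorem in base `q²` expands into Cauchy's finite form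
`∑_{|m| ≤ n} [2n, n+m]_{q²} q^{m²} w^m`. As `n → ∞` every Gaussian binomial `[2n, n+m]_{q²}`
tends to `1 / (q²; q²)_∞`, and they are all bounded by one constant, so dominated convergence
for series (Tannery's theorem) turns the finite identity into the triple product.
-/

open Finset Filter Topology

namespace JacobiTripleProduct

section Algebra

variable {R : Type*} [CommRing R]

def gaussBinom (Q : R) : ℕ → ℕ → R
  | _, 0 => 1
  | 0, _ + 1 => 0
  | n + 1, k + 1 => gaussBinom Q n k + Q ^ (k + 1) * gaussBinom Q n (k + 1)

/-- `(Q; Q)_n` -/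
def qPochhammer (Q : R) (n : ℕ) : R := ∏ j ∈ range n, (1 - Q ^ (j + 1))

variable (Q : R)

@[simp] lemma gaussBinom_zero_right (n : ℕ) : gaussBinom Q n 0 = 1 := by
  cases n <;> rfl

lemma gaussBinom_succ_succ (n k : ℕ) :
    gaussBinom Q (n + 1) (k + 1) = gaussBinom Q n k + Q ^ (k + 1) * gaussBinom Q n (k + 1) :=
  rfl

lemma gaussBinom_eq_zero_of_lt {n k : ℕ} (h : n < k) : gaussBinom Q n k = 0 := by
  induction n generalizing k with
  | zero => obtain ⟨k, rfl⟩ := Nat.exists_eq_add_of_lt h; rfl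
  | succ n ih =>
    obtain ⟨k, rfl⟩ := Nat.exists_eq_add_of_le' (Nat.one_le_of_lt h)
    rw [gaussBinom_succ_succ, ih (by omega), ih (by omega), mul_zero, add_zero]

lemma qPochhammer_succ (n : ℕ) : qPochhammer Q (n + 1) = qPochhammer Q n * (1 - Q ^ (n + 1)) :=
  prod_range_succ _ _

lemma gaussBinom_mul_qPochhammer {n k : ℕ} (h : k ≤ n) :
    gaussBinom Q n k * (qPochhammer Q k * qPochhammer Q (n - k)) = qPochhammer Q n := by
  induction n generalizing k with
  | zero => obtain rfl := Nat.le_zero.mp h; simp [qPochhammer]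
  | succ n ih =>
    cases k with
    | zero => simp [qPochhammer]
    | succ k =>
      rw [gaussBinom_succ_succ, qPochhammer_succ, qPochhammer_succ, Nat.add_sub_add_right]
      obtain h | h := Nat.lt_or_eq_of_le h
      · have h₁ := ih (k := k) (by omega)
        have h₂ := ih (k := k + 1) (by omega)
        rw [show n - k = n - (k + 1) + 1 by omega, qPochhammer_succ] at h₁ ⊢
        rw [show n - (k + 1) + 1 = n - k by omega] at h₁ ⊢
        rw [qPochhammer_succ] at h₂
        have e : Q ^ (k + 1) * Q ^ (n - k) = Q ^ (n + 1) := by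
          rw [← pow_add]; congr 1; omega
        linear_combination (1 - Q ^ (k + 1)) * h₁ + Q ^ (k + 1) * (1 - Q ^ (n - k)) * h₂ -
          qPochhammer Q n * e
      · obtain rfl : k = n := by omega
        have h₀ := ih (k := k) le_rfl
        rw [gaussBinom_eq_zero_of_lt Q (Nat.lt_succ_self k), Nat.sub_self] at *
        linear_combination (1 - Q ^ (k + 1)) * h₀

theorem prod_one_add_mul_pow_eq_sum_gaussBinom (x : R) (n : ℕ) :
    ∏ t ∈ range n, (1 + x * Q ^ t) =
      ∑ k ∈ range (n + 1), Q ^ k.choose 2 * gaussBinom Q n k * x ^ k := by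
  induction n generalizing x with
  | zero => simp
  | succ n ih =>
    set g : ℕ → R := fun k => Q ^ (k.choose 2 + k) * gaussBinom Q n k * x ^ k
    have hg : ∀ k, g (k + 1) =
        Q ^ (k + 1).choose 2 * (Q ^ (k + 1) * gaussBinom Q n (k + 1)) * x ^ (k + 1) :=
      fun k => by simp only [g]; ring
    have top : g (n + 1) = 0 := by simp [g, gaussBinom_eq_zero_of_lt Q (Nat.lt_succ_self n)]
    calc ∏ t ∈ range (n + 1), (1 + x * Q ^ t)
        = (∏ t ∈ range n, (1 + x * Q * Q ^ t)) * (1 + x) := by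
          rw [prod_range_succ']; simp only [pow_succ', pow_zero, mul_one, mul_assoc]
      _ = (∑ k ∈ range (n + 1), g k) * (1 + x) := by
          rw [ih]; refine congrArg (· * _) (sum_congr rfl fun k _ => ?_); simp only [g]; ring
      _ = ∑ k ∈ range (n + 1), g k * x + ∑ k ∈ range (n + 1 + 1), g k := by
          rw [sum_range_succ _ (n + 1), top, add_zero, mul_add, mul_one, sum_mul, add_comm]
      _ = _ := by
          rw [sum_range_succ' (fun k => Q ^ k.choose 2 * gaussBinom Q (n + 1) k * x ^ k),
            sum_range_succ' g, ← add_assoc, ← sum_add_distrib]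
          refine congrArg₂ (· + ·) (sum_congr rfl fun k _ => ?_) (by simp [g])
          rw [hg, gaussBinom_succ_succ]
          simp only [g, Nat.choose_succ_succ', Nat.choose_one_right]
          ring

end Algebra

section FiniteIdentity

variable {K : Type*} [Field K] {q w : K}

lemma prod_one_add_mul_inv_pow (hq : q ≠ 0) (hw : w ≠ 0) (n : ℕ) :
    ∏ j ∈ range n, (1 + w * (q ^ (2 * j + 1))⁻¹) =
      w ^ n * (q ^ (n ^ 2))⁻¹ * ∏ j ∈ range n, (1 + q ^ (2 * j + 1) * w⁻¹) := by
  induction n with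
  | zero => simp
  | succ n ih => rw [prod_range_succ, prod_range_succ, ih]; field_simp; ring

lemma prod_one_add_mul_sq_pow (hq : q ≠ 0) (hw : w ≠ 0) (n : ℕ) :
    ∏ t ∈ range (2 * n), (1 + w * q * (q ^ (2 * n))⁻¹ * (q ^ 2) ^ t) =
      w ^ n * (q ^ (n ^ 2))⁻¹ *
        ∏ j ∈ range n, ((1 + q ^ (2 * j + 1) * w) * (1 + q ^ (2 * j + 1) * w⁻¹)) := by
  set x := w * q * (q ^ (2 * n))⁻¹ with hx
  have low : ∀ j ∈ range n, 1 + x * (q ^ 2) ^ (n - 1 - j) = 1 + w * (q ^ (2 * j + 1))⁻¹ :=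
    fun j hj => by
      have e : q ^ (2 * n) = (q ^ 2) ^ (n - 1 - j) * q * q ^ (2 * j + 1) := by
        rw [← pow_mul, ← pow_succ, ← pow_add]; congr 1; have := mem_range.mp hj; omega
      rw [hx, e]; field_simp
  have high : ∀ s ∈ range n, 1 + x * (q ^ 2) ^ (n + s) = 1 + q ^ (2 * s + 1) * w :=
    fun s _ => by
      rw [hx, ← pow_mul, show 2 * (n + s) = 2 * n + 2 * s by ring, pow_add]; field_simp; ring
  rw [two_mul, prod_range_add, ← prod_range_reflect, prod_congr rfl low, prod_congr rfl high,
    prod_one_add_mul_inv_pow hq hw, prod_mul_distrib]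
  ring

lemma sq_pow_choose_mul_pow (hq : q ≠ 0) (hw : w ≠ 0) (n k : ℕ) :
    (q ^ 2) ^ k.choose 2 * (w * q * (q ^ (2 * n))⁻¹) ^ k =
      w ^ n * (q ^ (n ^ 2))⁻¹ * (q ^ (((k : ℤ) - n) ^ 2) * w ^ ((k : ℤ) - n)) := by
  have hchoose : k.choose 2 * 2 + k = k ^ 2 := by
    rw [Nat.choose_two_right, Nat.div_mul_cancel (Nat.even_mul_pred_self k).two_dvd]
    cases k <;> simp; ring
  have hexp : ((k : ℤ) - n) ^ 2 =
      ((2 * k.choose 2 + k + n ^ 2 : ℕ) : ℤ) - ((2 * n * k : ℕ) : ℤ) := by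
    push_cast
    linear_combination (-1 : ℤ) * (by exact_mod_cast hchoose : (k.choose 2 * 2 + k : ℤ) = k ^ 2)
  rw [hexp, zpow_sub₀ hq, zpow_sub₀ hw, zpow_natCast, zpow_natCast, zpow_natCast, zpow_natCast,
    mul_pow, mul_pow, inv_pow, ← pow_mul]
  field_simp
  ring

theorem prod_eq_sum_gaussBinom (hq : q ≠ 0) (hw : w ≠ 0) (n : ℕ) :
    ∏ j ∈ range n, ((1 + q ^ (2 * j + 1) * w) * (1 + q ^ (2 * j + 1) * w⁻¹)) =
      ∑ m ∈ Icc (-n : ℤ) n,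
        gaussBinom (q ^ 2) (2 * n) (m + n).toNat * (q ^ (m ^ 2) * w ^ m) := by
  have h := prod_one_add_mul_pow_eq_sum_gaussBinom (q ^ 2) (w * q * (q ^ (2 * n))⁻¹) (2 * n)
  simp_rw [prod_one_add_mul_sq_pow hq hw, mul_right_comm _ (gaussBinom _ _ _),
    sq_pow_choose_mul_pow hq hw, mul_assoc, ← mul_sum] at h
  rw [mul_left_cancel₀ (inv_ne_zero (pow_ne_zero _ hq)) (mul_left_cancel₀ (pow_ne_zero _ hw) h)]
  refine sum_nbij' (fun k => (k : ℤ) - n) (fun m => (m + n).toNat)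
    (fun k hk => by simp at hk ⊢; omega) (fun m hm => by simp at hm ⊢; omega)
    (fun k _ => by simp) (fun m hm => by simp at hm ⊢; omega) fun k _ => ?_
  rw [show ((k : ℤ) - n + n).toNat = k by omega]
  ring

end FiniteIdentity

section Analysis

variable {Q : ℂ}

lemma one_sub_pow_succ_ne_zero (hQ : ‖Q‖ < 1) (j : ℕ) : 1 - Q ^ (j + 1) ≠ 0 := by
  refine sub_ne_zero.mpr fun h => ?_
  have : ‖Q ^ (j + 1)‖ < 1 := by
    rw [norm_pow]; exact pow_lt_one₀ (norm_nonneg Q) hQ j.succ_ne_zero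
  simp [← h] at this

lemma qPochhammer_ne_zero (hQ : ‖Q‖ < 1) (n : ℕ) : qPochhammer Q n ≠ 0 :=
  prod_ne_zero_iff.mpr fun j _ => one_sub_pow_succ_ne_zero hQ j

lemma tprod_one_sub_pow_ne_zero (hQ : ‖Q‖ < 1) : ∏' j : ℕ, (1 - Q ^ (j + 1)) ≠ 0 := by
  simp_rw [sub_eq_add_neg]
  refine tprod_one_add_ne_zero_of_summable (fun j => ?_) ?_
  · simpa [← sub_eq_add_neg] using one_sub_pow_succ_ne_zero hQ j
  · simpa using (summable_nat_add_iff 1).mpr (summable_geometric_of_lt_one (norm_nonneg _) hQ)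

lemma tendsto_qPochhammer (hQ : ‖Q‖ < 1) :
    Tendsto (qPochhammer Q) atTop (𝓝 (∏' j : ℕ, (1 - Q ^ (j + 1)))) :=
  (ModularForm.multipliable_one_sub_pow hQ).hasProd.tendsto_prod_nat

lemma gaussBinom_add_eq_qPochhammer (hQ : ‖Q‖ < 1) (a b : ℕ) :
    gaussBinom Q (a + b) a =
      qPochhammer Q (a + b) * (qPochhammer Q a)⁻¹ * (qPochhammer Q b)⁻¹ := by
  have h := gaussBinom_mul_qPochhammer Q (Nat.le_add_right a b)
  rw [Nat.add_sub_cancel_left] at h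
  rw [← h]
  field_simp [qPochhammer_ne_zero hQ]

lemma tendsto_gaussBinom {ι : Type*} {l : Filter ι} {a b : ι → ℕ} (hQ : ‖Q‖ < 1)
    (ha : Tendsto a l atTop) (hb : Tendsto b l atTop) :
    Tendsto (fun i => gaussBinom Q (a i + b i) (a i)) l
      (𝓝 (∏' j : ℕ, (1 - Q ^ (j + 1)))⁻¹) := by
  have hA := tprod_one_sub_pow_ne_zero hQ
  have hP := tendsto_qPochhammer hQ
  have hab : Tendsto (fun i => a i + b i) l atTop :=
    tendsto_atTop_mono (fun i => le_add_right le_rfl) ha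
  have h := ((hP.comp hab).mul ((hP.comp ha).inv₀ hA)).mul ((hP.comp hb).inv₀ hA)
  rw [mul_inv_cancel₀ hA, one_mul] at h
  simp only [gaussBinom_add_eq_qPochhammer hQ]
  exact h

lemma tendsto_gaussBinom_two_mul (hQ : ‖Q‖ < 1) (m : ℤ) :
    Tendsto (fun n : ℕ => gaussBinom Q (2 * n) (m + n).toNat) atTop
      (𝓝 (∏' j : ℕ, (1 - Q ^ (j + 1)))⁻¹) := by
  have h := tendsto_gaussBinom hQ (a := fun n : ℕ => (m + n).toNat) (b := fun n => (n - m).toNat)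
    (tendsto_atTop_atTop.mpr fun b => ⟨b + m.natAbs, fun n hn => by omega⟩)
    (tendsto_atTop_atTop.mpr fun b => ⟨b + m.natAbs, fun n hn => by omega⟩)
  refine h.congr' ?_
  filter_upwards [eventually_ge_atTop m.natAbs] with n hn
  rw [show (m + n).toNat + (n - m).toNat = 2 * n by omega]

lemma exists_norm_gaussBinom_le (hQ : ‖Q‖ < 1) :
    ∃ C, ∀ n k, ‖gaussBinom Q n k‖ ≤ C := by
  have hP := tendsto_qPochhammer hQ
  obtain ⟨C₁, hC₁⟩ := hP.norm.bddAbove_range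
  obtain ⟨C₂, hC₂⟩ := (hP.inv₀ (tprod_one_sub_pow_ne_zero hQ)).norm.bddAbove_range
  have hC₁0 : 0 ≤ C₁ := (norm_nonneg _).trans (hC₁ ⟨0, rfl⟩)
  have hC₂0 : 0 ≤ C₂ := (norm_nonneg _).trans (hC₂ ⟨0, rfl⟩)
  refine ⟨C₁ * C₂ * C₂, fun n k => ?_⟩
  obtain h | h := lt_or_ge n k
  · rw [gaussBinom_eq_zero_of_lt Q h, norm_zero]
    positivity
  · obtain ⟨b, rfl⟩ := Nat.exists_eq_add_of_le h
    rw [gaussBinom_add_eq_qPochhammer hQ, norm_mul, norm_mul]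
    gcongr
    exacts [hC₁ ⟨_, rfl⟩, hC₂ ⟨_, rfl⟩, hC₂ ⟨_, rfl⟩]

lemma summable_pow_sq_mul_pow {r : ℝ} (hr0 : 0 ≤ r) (hr : r < 1) (s : ℝ) :
    Summable fun n : ℕ => r ^ (n ^ 2) * s ^ n := by
  have h : Tendsto (fun n => r ^ n * ‖s‖) atTop (𝓝 0) := by
    simpa using (tendsto_pow_atTop_nhds_zero_of_lt_one hr0 hr).mul_const ‖s‖
  refine summable_geometric_two.of_norm_bounded_eventually_nat ?_
  filter_upwards [h.eventually_le_const one_half_pos] with n hn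
  calc ‖r ^ (n ^ 2) * s ^ n‖ = (r ^ n * ‖s‖) ^ n := by
        rw [norm_mul, norm_pow, norm_pow, Real.norm_of_nonneg hr0, mul_pow, ← pow_mul, sq]
    _ ≤ (1 / 2) ^ n := pow_le_pow_left₀ (by positivity) hn n

lemma summable_norm_pow_sq_mul_zpow {q : ℂ} (hq : ‖q‖ < 1) (w : ℂ) :
    Summable fun m : ℤ => ‖q ^ (m ^ 2) * w ^ m‖ := by
  rw [summable_int_iff_summable_nat_and_neg]
  constructor
  · refine (summable_pow_sq_mul_pow (norm_nonneg q) hq ‖w‖).congr fun n => ?_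
    simp [← zpow_natCast]
  · refine (summable_pow_sq_mul_pow (norm_nonneg q) hq ‖w⁻¹‖).congr fun n => ?_
    simp [← zpow_natCast]

lemma multipliable_one_add_pow_mul {q : ℂ} (hq : ‖q‖ < 1) (c : ℂ) :
    Multipliable fun j : ℕ => 1 + q ^ (2 * j + 1) * c := by
  refine multipliable_one_add_of_summable ?_
  have hq2 : ‖q‖ ^ 2 < 1 := pow_lt_one₀ (norm_nonneg q) hq two_ne_zero
  refine ((summable_geometric_of_lt_one (by positivity) hq2).mul_left (‖q‖ * ‖c‖)).congr
    fun j => ?_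
  rw [norm_mul, norm_pow, pow_succ _ (2 * j), pow_mul]
  ring

theorem hasProd_jacobi {q w : ℂ} (hq : ‖q‖ < 1) (hq0 : q ≠ 0) (hw : w ≠ 0) :
    HasProd (fun j : ℕ => (1 + q ^ (2 * j + 1) * w) * (1 + q ^ (2 * j + 1) * w⁻¹))
      ((∏' j : ℕ, (1 - (q ^ 2) ^ (j + 1)))⁻¹ * ∑' m : ℤ, q ^ (m ^ 2) * w ^ m) := by
  have hQ : ‖q ^ 2‖ < 1 := by rw [norm_pow]; exact pow_lt_one₀ (norm_nonneg q) hq two_ne_zero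
  obtain ⟨C, hC⟩ := exists_norm_gaussBinom_le hQ
  rw [((multipliable_one_add_pow_mul hq w).mul
    (multipliable_one_add_pow_mul hq w⁻¹)).hasProd_iff_tendsto_nat, ← tsum_mul_left]
  simp_rw [prod_eq_sum_gaussBinom hq0 hw]
  refine (tendsto_tsum_of_dominated_convergence ((summable_norm_pow_sq_mul_zpow hq w).mul_left C)
    (fun m => ?_) (.of_forall fun n m => ?_)).congr fun n => (sum_eq_tsum_indicator _ _).symm
  · refine ((tendsto_gaussBinom_two_mul hQ m).mul_const _).congr' ?_
    filter_upwards [eventually_ge_atTop m.natAbs] with n hn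
    rw [Set.indicator_of_mem (mem_coe.mpr (mem_Icc.mpr ⟨by omega, by omega⟩))]
  · refine (norm_indicator_le_norm_self _ _).trans ?_
    rw [norm_mul]
    gcongr
    exact hC _ _

end Analysis

end JacobiTripleProduct

open JacobiTripleProduct in
/-- **Jacobi triple product identity.** For a complex number `q` with `‖q‖ < 1` and a
nonzero complex number `y`, the infinite product
`∏_{k≥1} (1-q^{2k})(1+q^{2k-1}y^2)(1+q^{2k-1}y^{-2})` equals `∑_{k∈ℤ} q^{k²} y^{2k}`. -/
theorem jacobi_triple_product (q y : ℂ) (hq : ‖q‖ < 1) (hy : y ≠ 0) :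
    (∏' k : ℕ, ((1 - q ^ (2 * (k + 1))) * (1 + q ^ (2 * (k + 1) - 1) * y ^ 2) *
      (1 + q ^ (2 * (k + 1) - 1) * (y⁻¹) ^ 2))) =
    ∑' k : ℤ, q ^ (k ^ 2) * y ^ (2 * k) := by
  obtain rfl | hq0 := eq_or_ne q 0
  · have hterm (k : ℕ) : (1 - (0 : ℂ) ^ (2 * (k + 1))) * (1 + 0 ^ (2 * (k + 1) - 1) * y ^ 2) *
        (1 + 0 ^ (2 * (k + 1) - 1) * (y⁻¹) ^ 2) = 1 := by
      rw [zero_pow (by omega), zero_pow (by omega)]; ring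
    rw [tprod_congr hterm, tprod_one,
      tsum_eq_single 0 fun m hm => by rw [zero_zpow _ (pow_ne_zero 2 hm), zero_mul]]
    simp
  have hQ : ‖q ^ 2‖ < 1 := by rw [norm_pow]; exact pow_lt_one₀ (norm_nonneg q) hq two_ne_zero
  have h := (ModularForm.multipliable_one_sub_pow hQ).hasProd.mul
    (hasProd_jacobi hq hq0 (pow_ne_zero 2 hy))
  rw [mul_inv_cancel_left₀ (tprod_one_sub_pow_ne_zero hQ)] at h
  convert h.tprod_eq using 1
  · refine tprod_congr fun k => ?_
    rw [show 2 * (k + 1) - 1 = 2 * k + 1 by omega, inv_pow, ← pow_mul]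
    ring
  · refine tsum_congr fun k => ?_
    rw [zpow_mul]
    norm_cast
end

section
/- Character identity for the decomposition of the F⊕NSR Verma module: as formal power series in q^{1/2}, ∏_{k≥1} (1+q^{k-1/2})^2/(1-q^k) = ∑_{n∈(1/2)ℤ} q^{2n^2} ∏_{k≥1} 1/(1-q^k)^2, where the sum is over all half-integers n (i.e. 2n ∈ ℤ). -/
/-!
The identity is Gauss's case `∑_{m ∈ ℤ} x^{m²} = ∏_{j ≥ 0} (1 + x^{2j+1})² (1 - x^{2j+2})` of the
Jacobi triple product, divided by `∏ (1 - x^{2k})²`. Its finite form comes from Cauchy's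
`q`-binomial theorem `∏_{j<n} (1 + q^j t) = ∑_k q^{k(k-1)/2} [n choose k]_q t^k` at `n = 2N`,
`q = x²`, `t = x^{1-2N}`: it reads
`(∏_{j<N} (1 + x^{2j+1}))² = ∑_{|m| ≤ N} x^{m²} [2N choose N+m]_q`.
As `N → ∞` each `[2N choose N+m]_q` tends to `1 / ∏ (1 - q^i)`, and all of them are bounded by
`1 / ∏ (1 - |q|^i)²`, so Tannery's theorem gives the limit.
-/

open Finset Filter Topology

section CommSemiring

variable {R : Type*} [CommSemiring R] (q : R)

def gaussBinom : ℕ → ℕ → R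
  | _, 0 => 1
  | 0, _ + 1 => 0
  | n + 1, k + 1 => gaussBinom n k + q ^ (k + 1) * gaussBinom n (k + 1)

@[simp] lemma gaussBinom_zero_right (n : ℕ) : gaussBinom q n 0 = 1 := by
  cases n <;> rfl

@[simp] lemma gaussBinom_zero_succ (k : ℕ) : gaussBinom q 0 (k + 1) = 0 := rfl

lemma gaussBinom_succ_succ (n k : ℕ) :
    gaussBinom q (n + 1) (k + 1) = gaussBinom q n k + q ^ (k + 1) * gaussBinom q n (k + 1) :=
  rfl

lemma gaussBinom_eq_zero_of_lt : ∀ {n k : ℕ}, n < k → gaussBinom q n k = 0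
  | 0, _ + 1, _ => rfl
  | n + 1, k + 1, h => by
    rw [gaussBinom_succ_succ, gaussBinom_eq_zero_of_lt (by omega),
      gaussBinom_eq_zero_of_lt (by omega), mul_zero, add_zero]

@[simp] lemma gaussBinom_self : ∀ n : ℕ, gaussBinom q n n = 1
  | 0 => rfl
  | n + 1 => by
    rw [gaussBinom_succ_succ, gaussBinom_self n, gaussBinom_eq_zero_of_lt q n.lt_succ_self,
      mul_zero, add_zero]

theorem prod_one_add_pow_mul_eq_sum (n : ℕ) (t : R) :
    ∏ j ∈ range n, (1 + q ^ j * t) =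
      ∑ k ∈ range (n + 1), q ^ k.choose 2 * gaussBinom q n k * t ^ k := by
  induction n generalizing t with
  | zero => simp
  | succ n ih =>
    have hq : ∀ j, q ^ (j + 1) * t = q ^ j * (q * t) := fun j => by ring
    have hchoose : ∀ k, (k + 1).choose 2 = k.choose 2 + k := fun k => by
      rw [Nat.choose_succ_succ, Nat.choose_one_right, add_comm]
    rw [prod_range_succ', pow_zero, one_mul]
    simp_rw [hq]
    rw [ih, sum_range_succ' _ (n + 1)]
    simp only [gaussBinom_succ_succ, mul_add, add_mul, sum_add_distrib, mul_one]
    have hlow : (∑ k ∈ range (n + 1), q ^ k.choose 2 * gaussBinom q n k * (q * t) ^ k) * t =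
        ∑ k ∈ range (n + 1), q ^ (k + 1).choose 2 * gaussBinom q n k * t ^ (k + 1) := by
      rw [sum_mul]
      exact sum_congr rfl fun k _ => by rw [hchoose]; ring
    have hhigh : ∑ k ∈ range (n + 1), q ^ k.choose 2 * gaussBinom q n k * (q * t) ^ k =
        ∑ k ∈ range (n + 1), q ^ (k + 1).choose 2 * (q ^ (k + 1) * gaussBinom q n (k + 1)) *
          t ^ (k + 1) + 1 := by
      rw [sum_range_succ' _ n, sum_range_succ _ n, gaussBinom_eq_zero_of_lt q n.lt_succ_self]
      simp only [mul_zero, zero_mul, add_zero, gaussBinom_zero_right, pow_zero, mul_one,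
        Nat.choose_zero_succ]
      exact congrArg (· + 1) (sum_congr rfl fun k _ => by ring)
    rw [hlow, hhigh]
    simp only [gaussBinom_zero_right, Nat.choose_zero_succ, pow_zero, mul_one]
    ring

end CommSemiring

section CommRing

variable {R : Type*} [CommRing R] (q : R)

def qPochhammer (n : ℕ) : R := ∏ i ∈ range n, (1 - q ^ (i + 1))

lemma qPochhammer_succ (n : ℕ) : qPochhammer q (n + 1) = qPochhammer q n * (1 - q ^ (n + 1)) :=
  prod_range_succ _ _

theorem gaussBinom_add_mul_qPochhammer (k l : ℕ) :
    gaussBinom q (k + l) k * qPochhammer q k * qPochhammer q l = qPochhammer q (k + l) := by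
  induction l generalizing k with
  | zero => simp [qPochhammer]
  | succ l ihl =>
    induction k with
    | zero => simp [qPochhammer]
    | succ k ihk =>
      have hpascal : gaussBinom q (k + 1 + (l + 1)) (k + 1) =
          gaussBinom q (k + 1 + l) k + q ^ (k + 1) * gaussBinom q (k + 1 + l) (k + 1) := by
        rw [show k + 1 + (l + 1) = k + (l + 1) + 1 by omega, gaussBinom_succ_succ,
          show k + (l + 1) = k + 1 + l by omega]
      have hl := ihl (k + 1)
      rw [show k + (l + 1) = k + 1 + l by omega] at ihk
      rw [hpascal, show k + 1 + (l + 1) = k + 1 + l + 1 by omega]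
      simp only [qPochhammer_succ] at ihk hl ⊢
      linear_combination (1 - q ^ (k + 1)) * ihk + q ^ (k + 1) * (1 - q ^ (l + 1)) * hl

end CommRing

section Field

variable {K : Type*} [Field K] {x : K}

lemma sum_range_two_mul_add_one (N : ℕ) : ∑ i ∈ range N, (2 * i + 1) = N ^ 2 := by
  induction N with
  | zero => rfl
  | succ N ih => rw [sum_range_succ, ih]; ring

lemma prod_one_add_zpow_two_mul_add_one_sub (hx : x ≠ 0) (N : ℕ) :
    ∏ j ∈ range (2 * N), (1 + x ^ (2 * (j : ℤ) + 1 - 2 * N)) =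
      (∏ j ∈ range N, (1 + x ^ (2 * j + 1))) ^ 2 / x ^ (N ^ 2) := by
  rw [two_mul, prod_range_add, ← prod_range_reflect, sq, mul_div_right_comm]
  congr 1
  · rw [← sum_range_two_mul_add_one, ← prod_pow_eq_pow_sum, ← prod_div_distrib]
    refine prod_congr rfl fun i hi => ?_
    have hiN : i < N := mem_range.1 hi
    rw [show 2 * ((N - 1 - i : ℕ) : ℤ) + 1 - 2 * N = -((2 * i + 1 : ℕ) : ℤ) by omega, zpow_neg,
      zpow_natCast]
    field_simp
    ring
  · refine prod_congr rfl fun i _ => ?_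
    rw [show 2 * ((N + i : ℕ) : ℤ) + 1 - 2 * N = ((2 * i + 1 : ℕ) : ℤ) by push_cast; ring,
      zpow_natCast]

theorem sq_prod_one_add_pow_two_mul_add_one (hx : x ≠ 0) (N : ℕ) :
    (∏ j ∈ range N, (1 + x ^ (2 * j + 1))) ^ 2 =
      ∑ m ∈ Icc (-N : ℤ) N, x ^ (m ^ 2) * gaussBinom (x ^ 2) (2 * N) (N + m).toNat := by
  have hcauchy := prod_one_add_pow_mul_eq_sum (x ^ 2) (2 * N) (x ^ (1 - 2 * N : ℤ))
  have hlhs : ∀ j : ℕ, (x ^ 2) ^ j * x ^ (1 - 2 * N : ℤ) = x ^ (2 * (j : ℤ) + 1 - 2 * N) :=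
    fun j => by
      rw [← pow_mul, ← zpow_natCast, ← zpow_add₀ hx]
      push_cast
      ring_nf
  have hterm : ∀ k : ℕ, (x ^ 2) ^ k.choose 2 * gaussBinom (x ^ 2) (2 * N) k *
      (x ^ (1 - 2 * N : ℤ)) ^ k =
        x ^ (((k : ℤ) - N) ^ 2) * gaussBinom (x ^ 2) (2 * N) k / x ^ (N ^ 2) := by
    intro k
    have hchoose : ((2 * k.choose 2 : ℕ) : ℤ) = k ^ 2 - k := by
      induction k with
      | zero => rfl
      | succ k ih => rw [Nat.choose_succ_succ', Nat.choose_one_right]; push_cast at ih ⊢; linarith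
    have hexp : x ^ ((k : ℤ) ^ 2 - k) * x ^ ((1 - 2 * N : ℤ) * k) * x ^ (N ^ 2) =
        x ^ (((k : ℤ) - N) ^ 2) := by
      rw [← zpow_natCast x (N ^ 2), ← zpow_add₀ hx, ← zpow_add₀ hx]
      congr 1
      push_cast
      ring
    rw [← pow_mul, ← zpow_natCast, ← zpow_natCast _ k, ← zpow_mul, hchoose,
      eq_div_iff (pow_ne_zero _ hx)]
    linear_combination gaussBinom (x ^ 2) (2 * N) k * hexp
  simp only [hlhs, hterm, prod_one_add_zpow_two_mul_add_one_sub hx, ← sum_div] at hcauchy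
  rw [(div_left_inj' (pow_ne_zero _ hx)).1 hcauchy]
  refine sum_nbij' (fun k => (k : ℤ) - N) (fun m => (N + m).toNat) ?_ ?_ ?_ ?_ fun k hk => ?_
  any_goals intro _ h; simp only [mem_range, mem_Icc] at h ⊢; omega
  rw [show (N + ((k : ℤ) - N)).toNat = k by omega]

end Field

lemma norm_gaussBinom_le {R : Type*} [NormedCommRing R] [NormOneClass R] (q : R) :
    ∀ n k : ℕ, ‖gaussBinom q n k‖ ≤ gaussBinom ‖q‖ n k
  | _, 0 => by simp
  | 0, _ + 1 => by simp
  | n + 1, k + 1 => by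
    rw [gaussBinom_succ_succ, gaussBinom_succ_succ]
    refine (norm_add_le _ _).trans (add_le_add (norm_gaussBinom_le q n k) ?_)
    exact (norm_mul_le _ _).trans (mul_le_mul (norm_pow_le _ _)
      (norm_gaussBinom_le q n (k + 1)) (norm_nonneg _) (by positivity))

section NormedField

variable {K : Type*} [NormedField K] {q : K}

lemma one_sub_pow_succ_ne_zero (hq : ‖q‖ < 1) (i : ℕ) : 1 - q ^ (i + 1) ≠ 0 := by
  rw [sub_ne_zero]
  intro h
  have := pow_lt_one₀ (norm_nonneg q) hq i.succ_ne_zero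
  rw [← norm_pow, ← h, norm_one] at this
  exact this.false

lemma qPochhammer_ne_zero (hq : ‖q‖ < 1) (n : ℕ) : qPochhammer q n ≠ 0 :=
  prod_ne_zero_iff.2 fun i _ => one_sub_pow_succ_ne_zero hq i

lemma summable_norm_neg_pow_succ (hq : ‖q‖ < 1) : Summable fun i : ℕ => ‖-q ^ (i + 1)‖ := by
  simpa [summable_nat_add_iff] using summable_geometric_of_lt_one (norm_nonneg _) hq

variable [CompleteSpace K]

lemma hasProd_one_sub_pow_succ (hq : ‖q‖ < 1) :
    HasProd (fun i : ℕ => 1 - q ^ (i + 1)) (∏' i : ℕ, (1 - q ^ (i + 1))) := by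
  have := (multipliable_one_add_of_summable (f := fun i : ℕ => -q ^ (i + 1))
    (summable_norm_neg_pow_succ hq)).hasProd
  simp only [← sub_eq_add_neg] at this
  exact this

lemma tprod_one_sub_pow_succ_ne_zero (hq : ‖q‖ < 1) : ∏' i : ℕ, (1 - q ^ (i + 1)) ≠ 0 := by
  have := tprod_one_add_ne_zero_of_summable (f := fun i : ℕ => -q ^ (i + 1))
    (fun i => by rw [← sub_eq_add_neg]; exact one_sub_pow_succ_ne_zero hq i)
    (summable_norm_neg_pow_succ hq)
  simp only [← sub_eq_add_neg] at this
  exact this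

lemma tendsto_qPochhammer (hq : ‖q‖ < 1) :
    Tendsto (qPochhammer q) atTop (𝓝 (∏' i : ℕ, (1 - q ^ (i + 1)))) :=
  (hasProd_one_sub_pow_succ hq).tendsto_prod_nat

theorem tendsto_gaussBinom {α : Type*} {l : Filter α} {a b : α → ℕ} (hq : ‖q‖ < 1)
    (ha : Tendsto a l atTop) (hb : Tendsto b l atTop) :
    Tendsto (fun n => gaussBinom q (a n + b n) (a n)) l (𝓝 (∏' i : ℕ, (1 - q ^ (i + 1)))⁻¹) := by
  have hP := tprod_one_sub_pow_succ_ne_zero hq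
  have hF := tendsto_qPochhammer hq
  have hlim := ((hF.comp (ha.atTop_add_atTop hb)).mul ((hF.comp ha).inv₀ hP)).mul
    ((hF.comp hb).inv₀ hP)
  rw [mul_inv_cancel₀ hP, one_mul] at hlim
  refine hlim.congr fun n => ?_
  simp only [Function.comp_apply]
  rw [← gaussBinom_add_mul_qPochhammer q (a n) (b n)]
  field_simp [qPochhammer_ne_zero hq]

end NormedField

section Real

variable {r : ℝ}

lemma qPochhammer_nonneg (hr0 : 0 ≤ r) (hr1 : r ≤ 1) (n : ℕ) : 0 ≤ qPochhammer r n :=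
  prod_nonneg fun _ _ => sub_nonneg.2 (pow_le_one₀ hr0 hr1)

lemma qPochhammer_le_one (hr0 : 0 ≤ r) (hr1 : r ≤ 1) (n : ℕ) : qPochhammer r n ≤ 1 :=
  prod_le_one (fun _ _ => sub_nonneg.2 (pow_le_one₀ hr0 hr1))
    fun _ _ => sub_le_self _ (pow_nonneg hr0 _)

lemma antitone_qPochhammer (hr0 : 0 ≤ r) (hr1 : r ≤ 1) : Antitone (qPochhammer r) :=
  antitone_nat_of_succ_le fun n => by
    rw [qPochhammer_succ]
    exact mul_le_of_le_one_right (qPochhammer_nonneg hr0 hr1 n) (sub_le_self _ (pow_nonneg hr0 _))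

lemma tprod_one_sub_pow_succ_pos (hr0 : 0 ≤ r) (hr : r < 1) :
    0 < ∏' i : ℕ, (1 - r ^ (i + 1)) :=
  (tprod_nonneg fun i => sub_nonneg.2 (pow_le_one₀ hr0 hr.le)).lt_of_ne'
    (tprod_one_sub_pow_succ_ne_zero (by rwa [Real.norm_of_nonneg hr0]))

lemma tprod_one_sub_pow_succ_le_qPochhammer (hr0 : 0 ≤ r) (hr : r < 1) (n : ℕ) :
    ∏' i : ℕ, (1 - r ^ (i + 1)) ≤ qPochhammer r n :=
  (antitone_qPochhammer hr0 hr.le).le_of_tendsto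
    (tendsto_qPochhammer (by rwa [Real.norm_of_nonneg hr0])) n

theorem gaussBinom_le_inv_tprod_sq (hr0 : 0 ≤ r) (hr : r < 1) (n k : ℕ) :
    gaussBinom r n k ≤ ((∏' i : ℕ, (1 - r ^ (i + 1))) ^ 2)⁻¹ := by
  have hP := tprod_one_sub_pow_succ_pos hr0 hr
  rcases lt_or_ge n k with hnk | hkn
  · rw [gaussBinom_eq_zero_of_lt r hnk]
    positivity
  obtain ⟨l, rfl⟩ := Nat.exists_eq_add_of_le hkn
  have hFk := tprod_one_sub_pow_succ_le_qPochhammer hr0 hr k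
  have hFl := tprod_one_sub_pow_succ_le_qPochhammer hr0 hr l
  have hG : gaussBinom r (k + l) k = qPochhammer r (k + l) / (qPochhammer r k * qPochhammer r l) :=
    eq_div_of_mul_eq (mul_pos (hP.trans_le hFk) (hP.trans_le hFl)).ne'
      (by rw [← mul_assoc, gaussBinom_add_mul_qPochhammer])
  rw [hG, inv_eq_one_div, sq]
  exact div_le_div₀ zero_le_one (qPochhammer_le_one hr0 hr.le _) (mul_pos hP hP)
    (mul_le_mul hFk hFl hP.le (hP.le.trans hFk))

end Real

section Theta

variable {K : Type*} [NormedField K] {x : K}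

lemma norm_sq_lt_one (hx : ‖x‖ < 1) : ‖x ^ 2‖ < 1 := by
  rw [norm_pow]
  exact pow_lt_one₀ (norm_nonneg _) hx two_ne_zero

lemma norm_zpow_sq_le (hx : ‖x‖ ≤ 1) (m : ℤ) : ‖x ^ (m ^ 2)‖ ≤ ‖x‖ ^ m.natAbs := by
  rw [← Int.natAbs_sq, ← Nat.cast_pow, zpow_natCast, norm_pow]
  exact pow_le_pow_of_le_one (norm_nonneg _) hx (Nat.le_self_pow two_ne_zero _)

lemma summable_pow_natAbs {r : ℝ} (hr0 : 0 ≤ r) (hr : r < 1) :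
    Summable fun m : ℤ => r ^ m.natAbs :=
  .of_nat_of_neg (by simpa using summable_geometric_of_lt_one hr0 hr)
    (by simpa using summable_geometric_of_lt_one hr0 hr)

variable [CompleteSpace K]

theorem tendsto_sum_Icc_zpow_sq_mul_gaussBinom (hx : ‖x‖ < 1) :
    Tendsto (fun N : ℕ =>
        ∑ m ∈ Icc (-N : ℤ) N, x ^ (m ^ 2) * gaussBinom (x ^ 2) (2 * N) (N + m).toNat)
      atTop (𝓝 ((∑' m : ℤ, x ^ (m ^ 2)) * (∏' i : ℕ, (1 - (x ^ 2) ^ (i + 1)))⁻¹)) := by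
  have hq := norm_sq_lt_one hx
  set C := ((∏' i : ℕ, (1 - ‖x ^ 2‖ ^ (i + 1))) ^ 2)⁻¹
  let f : ℕ → ℤ → K := fun N m =>
    if m ∈ Icc (-N : ℤ) N then x ^ (m ^ 2) * gaussBinom (x ^ 2) (2 * N) (N + m).toNat else 0
  have hsum : ∀ N : ℕ,
      ∑ m ∈ Icc (-N : ℤ) N, x ^ (m ^ 2) * gaussBinom (x ^ 2) (2 * N) (N + m).toNat =
        ∑' m, f N m := fun N => by
    rw [tsum_eq_sum (s := Icc (-N : ℤ) N) fun m hm => if_neg hm]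
    exact sum_congr rfl fun m hm => (if_pos hm).symm
  have hlim : ∀ m : ℤ, Tendsto (f · m) atTop
      (𝓝 (x ^ (m ^ 2) * (∏' i : ℕ, (1 - (x ^ 2) ^ (i + 1)))⁻¹)) := fun m => by
    have ha : Tendsto (fun N : ℕ => (N + m).toNat) atTop atTop :=
      tendsto_atTop_atTop.2 fun b => ⟨b + m.natAbs, fun N hN => by omega⟩
    have hb : Tendsto (fun N : ℕ => (N - m).toNat) atTop atTop :=
      tendsto_atTop_atTop.2 fun b => ⟨b + m.natAbs, fun N hN => by omega⟩
    refine ((tendsto_gaussBinom hq ha hb).const_mul _).congr' ?_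
    filter_upwards [eventually_ge_atTop m.natAbs] with N hN
    simp only [f, if_pos (mem_Icc.2 (by omega : -(N : ℤ) ≤ m ∧ m ≤ N)),
      show 2 * N = (N + m).toNat + (N - m).toNat by omega]
  have hbound : ∀ N m, ‖f N m‖ ≤ ‖x‖ ^ m.natAbs * C := fun N m => by
    by_cases hm : m ∈ Icc (-N : ℤ) N
    · simp only [f, if_pos hm, norm_mul]
      exact mul_le_mul (norm_zpow_sq_le hx.le m)
        ((norm_gaussBinom_le _ _ _).trans (gaussBinom_le_inv_tprod_sq (norm_nonneg _) hq _ _))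
        (norm_nonneg _) (by positivity)
    · simp only [f, if_neg hm, norm_zero]
      positivity
  simp_rw [hsum, ← tsum_mul_right]
  exact tendsto_tsum_of_dominated_convergence
    ((summable_pow_natAbs (norm_nonneg _) hx).mul_right C) hlim (Eventually.of_forall hbound)

lemma hasProd_one_add_pow_two_mul_add_one (hx : ‖x‖ < 1) :
    HasProd (fun j : ℕ => 1 + x ^ (2 * j + 1)) (∏' j : ℕ, (1 + x ^ (2 * j + 1))) := by
  refine (multipliable_one_add_of_summable (f := fun j : ℕ => x ^ (2 * j + 1)) ?_).hasProd
  refine (summable_geometric_of_lt_one (norm_nonneg _) hx).of_nonneg_of_le (fun _ => norm_nonneg _)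
    fun j => ?_
  rw [norm_pow]
  exact pow_le_pow_of_le_one (norm_nonneg _) hx.le (by omega)

theorem tsum_zpow_sq_eq_tprod (hx : ‖x‖ < 1) :
    ∑' m : ℤ, x ^ (m ^ 2) =
      (∏' j : ℕ, (1 + x ^ (2 * j + 1))) ^ 2 * ∏' i : ℕ, (1 - (x ^ 2) ^ (i + 1)) := by
  rcases eq_or_ne x 0 with rfl | hx0
  · rw [tsum_eq_single 0 fun m hm => zero_zpow _ (pow_ne_zero 2 hm)]
    simp
  have hq := norm_sq_lt_one hx
  have hfinite := (hasProd_one_add_pow_two_mul_add_one hx).tendsto_prod_nat.pow 2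
  simp_rw [sq_prod_one_add_pow_two_mul_add_one hx0] at hfinite
  rw [tendsto_nhds_unique hfinite (tendsto_sum_Icc_zpow_sq_mul_gaussBinom hx), mul_assoc,
    inv_mul_cancel₀ (tprod_one_sub_pow_succ_ne_zero hq), mul_one]

end Theta

/-- Here `x = q^{1/2}`, so that `q^k = x^{2k}` and, for `n = m/2`, `q^{2n²} = x^{m²}`. -/
theorem character_decomposition_identity (x : ℂ) (hx : ‖x‖ < 1) :
    (∏' k : ℕ, ((1 + x ^ (2 * (k + 1) - 1)) ^ 2 / (1 - x ^ (2 * (k + 1))))) =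
    (∑' m : ℤ, x ^ (m ^ 2)) * ∏' k : ℕ, (1 / (1 - x ^ (2 * (k + 1))) ^ 2) := by
  have hq := norm_sq_lt_one hx
  have hP := hasProd_one_sub_pow_succ hq
  have hP0 := tprod_one_sub_pow_succ_ne_zero hq
  have hlhs := ((hasProd_one_add_pow_two_mul_add_one hx).pow 2).div₀ hP hP0
  have hrhs := (hP.pow 2).inv₀ (pow_ne_zero 2 hP0)
  simp only [one_div, pow_mul, show ∀ k, 2 * (k + 1) - 1 = 2 * k + 1 by omega]
  rw [hlhs.tprod_eq, hrhs.tprod_eq, tsum_zpow_sq_eq_tprod hx]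
  field_simp
end

section
/- Sum rule for shifted conformal weights: with Δ(P,β) = (β+β^{-1})^2/4 - P^2, Δ^{NS} = ((b+b^{-1})^2/4 - P^2)/2, P^(1) = P/√(2-2b^2), P^(2) = P/√(2-2b^{-2}), (b^(1))^2 = 2b^2/(1-b^2), (b^(2))^{-2} = 2b^{-2}/(1-b^{-2}), and P^(1)_n = P^(1) + n·b^(1), P^(2)_n = P^(2) + n·(b^(2))^{-1}, one has Δ(P^(1)_n, b^(1)) + Δ(P^(2)_n, b^(2)) = Δ^{NS} + 2n^2 for every n with 2n ∈ ℤ. -/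
/-!
Rescaling by `s` with `s² = 2 - 2c²` turns the weight at `(p / s, 2c / s)` into the weight at
`(p, c)` divided by `s²`, and the shift by `n·b⁽¹⁾` becomes the shift `p ↦ p + 2nc`. Since the
weight is invariant under `β ↦ β⁻¹`, both summands are weights at `β = b`, with denominators
`2 - 2b²` and `2 - 2b⁻² = -(2 - 2b²)/b²`. Their sum collapses because
`(pb + 2n)² - (p + 2nb)² = (b² - 1)(p² - 4n²)`.
-/

noncomputable def conformalWeight (p β : ℂ) : ℂ := (β + β⁻¹) ^ 2 / 4 - p ^ 2

theorem conformalWeight_inv_right (p β : ℂ) :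
    conformalWeight p β⁻¹ = conformalWeight p β := by
  rw [conformalWeight, conformalWeight, inv_inv, add_comm]

theorem conformalWeight_div_of_sq_eq {c s : ℂ} (hc : c ≠ 0) (hc1 : c ^ 2 ≠ 1)
    (hs : s ^ 2 = 2 - 2 * c ^ 2) (p : ℂ) :
    conformalWeight (p / s) (2 * c / s) = conformalWeight p c / (2 - 2 * c ^ 2) := by
  have hs0 : s ≠ 0 := by
    rintro rfl
    exact hc1 (by linear_combination hs / 2)
  rw [← hs, conformalWeight, conformalWeight]
  field_simp
  rw [hs]
  ring

theorem conformalWeight_shift_add_shift_inv {b : ℂ} (hb : b ≠ 0) (hb2 : b ^ 2 ≠ 1) (p n : ℂ) :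
    conformalWeight (p + 2 * n * b) b / (2 - 2 * b ^ 2) +
        conformalWeight (p + 2 * n * b⁻¹) b / (2 - 2 * b⁻¹ ^ 2) =
      conformalWeight p b / 2 + 2 * n ^ 2 := by
  have hb2_sub : b ^ 2 - 1 ≠ 0 := sub_ne_zero.mpr hb2
  have hden : 2 - 2 * b⁻¹ ^ 2 = 2 * (b ^ 2 - 1) / b ^ 2 := by
    field_simp
  rw [hden, conformalWeight, conformalWeight, conformalWeight]
  field_simp
  ring

theorem shifted_weight_sum_rule_general (b P : ℂ) (hb : b ≠ 0) (hb2 : b ^ 2 ≠ 1)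
    (s1 s2 : ℂ) (hs1 : s1 ^ 2 = 2 - 2 * b ^ 2) (hs2 : s2 ^ 2 = 2 - 2 * (b⁻¹) ^ 2)
    (n : ℂ)
    (Δ : ℂ → ℂ → ℂ) (hΔ : ∀ p β : ℂ, Δ p β = (β + β⁻¹) ^ 2 / 4 - p ^ 2) :
    Δ (P / s1 + n * (2 * b / s1)) (2 * b / s1) +
      Δ (P / s2 + n * (2 * b⁻¹ / s2)) ((2 * b⁻¹ / s2)⁻¹) =
    ((b + b⁻¹) ^ 2 / 4 - P ^ 2) / 2 + 2 * n ^ 2 := by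
  obtain rfl : Δ = conformalWeight := funext₂ hΔ
  have hb2_inv : b⁻¹ ^ 2 ≠ 1 := by rwa [inv_pow, inv_ne_one]
  have shift (c s : ℂ) : P / s + n * (2 * c / s) = (P + 2 * n * c) / s := by ring
  rw [shift, shift, conformalWeight_inv_right, conformalWeight_div_of_sq_eq hb hb2 hs1,
    conformalWeight_div_of_sq_eq (inv_ne_zero hb) hb2_inv hs2, conformalWeight_inv_right]
  exact conformalWeight_shift_add_shift_inv hb hb2 P n

/-- **Sum rule for the shifted conformal weights.** With
`Δ(P,β) = (β+β⁻¹)²/4 - P²`, `Δᴺˢ = ((b+b⁻¹)²/4 - P²)/2`,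
`P⁽¹⁾ = P/√(2-2b²)`, `P⁽²⁾ = P/√(2-2b⁻²)`, and the square roots `s₁, s₂` chosen
consistently so that `b⁽¹⁾ = 2b/s₁` (whence `(b⁽¹⁾)² = 2b²/(1-b²)`) and
`(b⁽²⁾)⁻¹ = 2b⁻¹/s₂` (whence `(b⁽²⁾)⁻² = 2b⁻²/(1-b⁻²)`), and with
`P⁽¹⁾ₙ = P⁽¹⁾ + n·b⁽¹⁾`, `P⁽²⁾ₙ = P⁽²⁾ + n·(b⁽²⁾)⁻¹`, one has
`Δ(P⁽¹⁾ₙ, b⁽¹⁾) + Δ(P⁽²⁾ₙ, b⁽²⁾) = Δᴺˢ + 2n²` for every half-integer `n`. -/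
theorem shifted_weight_sum_rule (b P : ℂ) (hb : b ≠ 0) (hb2 : b ^ 2 ≠ 1)
    (s1 s2 : ℂ) (hs1 : s1 ^ 2 = 2 - 2 * b ^ 2) (hs2 : s2 ^ 2 = 2 - 2 * (b⁻¹) ^ 2)
    (hs1' : s1 ≠ 0) (hs2' : s2 ≠ 0)
    (n : ℂ) (hn : ∃ m : ℤ, n = (m : ℂ) / 2)
    (Δ : ℂ → ℂ → ℂ) (hΔ : ∀ p β : ℂ, Δ p β = (β + β⁻¹) ^ 2 / 4 - p ^ 2) :
    Δ (P / s1 + n * (2 * b / s1)) (2 * b / s1) +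
      Δ (P / s2 + n * (2 * b⁻¹ / s2)) ((2 * b⁻¹ / s2)⁻¹) =
    ((b + b⁻¹) ^ 2 / 4 - P ^ 2) / 2 + 2 * n ^ 2 :=
  shifted_weight_sum_rule_general b P hb hb2 s1 s2 hs1 hs2 n Δ hΔ
end

section
/- Additivity of conformal weights of the split vertex operator: with α^(1) = α/√(2-2b^2), α^(2) = α/√(2-2b^{-2}), Q = b+b^{-1}, Q^(1) = b^(1)+(b^(1))^{-1}, Q^(2) = b^(2)+(b^(2))^{-1}, where (b^(1))^2 = 2b^2/(1-b^2) and (b^(2))^{-2} = 2b^{-2}/(1-b^{-2}), one has Δ(α^(1)-Q^(1)/2, b^(1)) + Δ(α^(2)-Q^(2)/2, b^(2)) = (1/2)·α(Q-α), where Δ(P,β) = (β+β^{-1})^2/4 - P^2. -/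
/-! With `Q = b + b⁻¹` and `s² = 2 - 2b²`, the split parameter `β = 2b/s` satisfies
`β + β⁻¹ = Q/s`, and likewise `Q/s₂` for the second factor, since `s₂² = 2 - 2(b⁻¹)²` is the
same relation for `b⁻¹`. Both the momentum and the background charge are thus rescaled by `1/s`,
so each weight `Δ(a - Q'/2, β) = a(Q' - a)` equals `α(Q - α)/s²`, and the claim reduces to
`1/(2 - 2b²) + 1/(2 - 2b⁻²) = 1/2`. -/

section SplitVertex

variable {K : Type*} [Field K] [NeZero (2 : K)]

theorem sq_div_four_sub_sq_sub_half (a Q : K) : Q ^ 2 / 4 - (a - Q / 2) ^ 2 = a * (Q - a) := by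
  rw [show (4 : K) = 2 ^ 2 by norm_num]
  field_simp
  ring

theorem two_mul_div_add_inv_of_sq_eq {b s : K} (hb : b ≠ 0) (hs0 : s ≠ 0)
    (hs : s ^ 2 = 2 - 2 * b ^ 2) : 2 * b / s + (2 * b / s)⁻¹ = (b + b⁻¹) / s := by
  field_simp
  linear_combination hs

theorem inv_sq_add_inv_sq_eq_half {b s t : K} (hb : b ≠ 0) (hs0 : s ≠ 0)
    (hs : s ^ 2 = 2 - 2 * b ^ 2) (ht : t ^ 2 = 2 - 2 * b⁻¹ ^ 2) :
    (s ^ 2)⁻¹ + (t ^ 2)⁻¹ = 2⁻¹ := by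
  have hb1 : b ^ 2 ≠ 1 := by
    rintro h
    exact hs0 (pow_eq_zero_iff two_ne_zero |>.mp (by rw [hs, h]; ring))
  have := sub_ne_zero.mpr hb1
  have := sub_ne_zero.mpr hb1.symm
  rw [hs, ht]
  field_simp
  ring

end SplitVertex

theorem split_vertex_weight_additivity_general (b α : ℂ) (hb : b ≠ 0)
    (s1 s2 : ℂ) (hs1 : s1 ^ 2 = 2 - 2 * b ^ 2) (hs2 : s2 ^ 2 = 2 - 2 * (b⁻¹) ^ 2)
    (hs1' : s1 ≠ 0) (hs2' : s2 ≠ 0)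
    (Δ : ℂ → ℂ → ℂ) (hΔ : ∀ p β : ℂ, Δ p β = (β + β⁻¹) ^ 2 / 4 - p ^ 2) :
    Δ (α / s1 - (2 * b / s1 + (2 * b / s1)⁻¹) / 2) (2 * b / s1) +
      Δ (α / s2 - ((2 * b⁻¹ / s2)⁻¹ + 2 * b⁻¹ / s2) / 2) ((2 * b⁻¹ / s2)⁻¹) =
    α * ((b + b⁻¹) - α) / 2 := by
  have hQ1 := two_mul_div_add_inv_of_sq_eq hb hs1' hs1
  have hQ2 := two_mul_div_add_inv_of_sq_eq (inv_ne_zero hb) hs2' hs2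
  rw [inv_inv, add_comm b⁻¹] at hQ2
  rw [hΔ, hΔ, inv_inv, sq_div_four_sub_sq_sub_half, sq_div_four_sub_sq_sub_half,
    add_comm (2 * b⁻¹ / s2)⁻¹, hQ1, hQ2]
  calc α / s1 * ((b + b⁻¹) / s1 - α / s1) + α / s2 * ((b + b⁻¹) / s2 - α / s2)
      = α * ((b + b⁻¹) - α) * ((s1 ^ 2)⁻¹ + (s2 ^ 2)⁻¹) := by ring
    _ = α * ((b + b⁻¹) - α) / 2 := by
      rw [inv_sq_add_inv_sq_eq_half hb hs1' hs1 hs2, div_eq_mul_inv]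

/-- **Additivity of conformal weights of the split vertex operator.** With
`α⁽¹⁾ = α/√(2-2b²)`, `α⁽²⁾ = α/√(2-2b⁻²)`, `Q = b+b⁻¹`, `Q⁽¹⁾ = b⁽¹⁾+(b⁽¹⁾)⁻¹`,
`Q⁽²⁾ = b⁽²⁾+(b⁽²⁾)⁻¹`, where the square roots `s₁, s₂` are chosen consistently so that
`b⁽¹⁾ = 2b/s₁` (whence `(b⁽¹⁾)² = 2b²/(1-b²)`) and `(b⁽²⁾)⁻¹ = 2b⁻¹/s₂`
(whence `(b⁽²⁾)⁻² = 2b⁻²/(1-b⁻²)`), and `Δ(P,β) = (β+β⁻¹)²/4 - P²`, one has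
`Δ(α⁽¹⁾-Q⁽¹⁾/2, b⁽¹⁾) + Δ(α⁽²⁾-Q⁽²⁾/2, b⁽²⁾) = α(Q-α)/2`. -/
theorem split_vertex_weight_additivity (b α : ℂ) (hb : b ≠ 0) (hb2 : b ^ 2 ≠ 1)
    (s1 s2 : ℂ) (hs1 : s1 ^ 2 = 2 - 2 * b ^ 2) (hs2 : s2 ^ 2 = 2 - 2 * (b⁻¹) ^ 2)
    (hs1' : s1 ≠ 0) (hs2' : s2 ≠ 0)
    (Δ : ℂ → ℂ → ℂ) (hΔ : ∀ p β : ℂ, Δ p β = (β + β⁻¹) ^ 2 / 4 - p ^ 2) :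
    Δ (α / s1 - (2 * b / s1 + (2 * b / s1)⁻¹) / 2) (2 * b / s1) +
      Δ (α / s2 - ((2 * b⁻¹ / s2)⁻¹ + 2 * b⁻¹ / s2) / 2) ((2 * b⁻¹ / s2)⁻¹) =
    α * ((b + b⁻¹) - α) / 2 :=
  split_vertex_weight_additivity_general b α hb s1 s2 hs1 hs2 hs1' hs2' Δ hΔ
end

section
/- Triple product determinant identity for traceless 2×2 matrices: for A, B, C ∈ sl(2,ℂ), (tr([A,B]C))^2 = -2·det of the 3×3 Gram matrix with entries tr(A^2), tr(AB), tr(AC); tr(BA), tr(B^2), tr(BC); tr(CA), tr(CB), tr(C^2). -/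
/-!
Writing a traceless matrix as `[[a, b], [c, -a]]` identifies `𝔰𝔩₂` with `R³` via `(a, b, c)`.
In these coordinates the trace form `tr (X * Y)` has Gram matrix `K = !![2, 0, 0; 0, 0, 1; 0, 1, 0]`
with `det K = -2`, so the Gram matrix of `A, B, C` is `P * K * Pᵀ` for the coordinate matrix `P`
and has determinant `-2 * (det P)²`. On the other hand `tr ([A, B] * C)` is an alternating
trilinear form on `R³`, namely `2 * det P`. Both sides of the identity are thus `4 * (det P)²`.
-/

open Matrix

namespace Sl2

variable {R : Type*} [CommRing R]

def coords (X : Matrix (Fin 2) (Fin 2) R) : Fin 3 → R := ![X 0 0, X 0 1, X 1 0]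

def traceForm : Matrix (Fin 3) (Fin 3) R := !![2, 0, 0; 0, 0, 1; 0, 1, 0]

def coordMatrix {ι : Type*} (M : ι → Matrix (Fin 2) (Fin 2) R) : Matrix ι (Fin 3) R :=
  of fun i => coords (M i)

lemma det_traceForm : (traceForm : Matrix (Fin 3) (Fin 3) R).det = -2 := by
  simp [traceForm, det_fin_three]

lemma apply_one_one_eq_neg {X : Matrix (Fin 2) (Fin 2) R} (hX : X.trace = 0) :
    X 1 1 = -X 0 0 := by
  rw [trace_fin_two] at hX
  linear_combination hX

lemma trace_mul_eq_coords_dotProduct {X Y : Matrix (Fin 2) (Fin 2) R}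
    (hX : X.trace = 0) (hY : Y.trace = 0) :
    (X * Y).trace = coords X ⬝ᵥ (traceForm *ᵥ coords Y) := by
  simp only [trace_fin_two, mul_apply, Fin.sum_univ_two, Fin.sum_univ_three, dotProduct, mulVec,
    coords, traceForm, of_apply, cons_val', cons_val_fin_one, cons_val_zero, cons_val_one, cons_val,
    apply_one_one_eq_neg hX, apply_one_one_eq_neg hY]
  ring

lemma gram_eq_coordMatrix_mul {ι : Type*} (M : ι → Matrix (Fin 2) (Fin 2) R)
    (hM : ∀ i, (M i).trace = 0) :
    (of fun i j => (M i * M j).trace : Matrix ι ι R) =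
      coordMatrix M * (traceForm : Matrix (Fin 3) (Fin 3) R) * (coordMatrix M)ᵀ := by
  ext i j
  rw [of_apply, trace_mul_eq_coords_dotProduct (hM i) (hM j), Matrix.mul_assoc, mul_apply]
  simp [coordMatrix, dotProduct, mul_apply, mulVec, Finset.mul_sum]

lemma det_gram (M : Fin 3 → Matrix (Fin 2) (Fin 2) R) (hM : ∀ i, (M i).trace = 0) :
    (of fun i j => (M i * M j).trace).det = -2 * (coordMatrix M).det ^ 2 := by
  rw [gram_eq_coordMatrix_mul M hM, det_mul, det_mul, det_transpose, det_traceForm]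
  ring

lemma trace_commutator_mul {A B C : Matrix (Fin 2) (Fin 2) R}
    (hA : A.trace = 0) (hB : B.trace = 0) (hC : C.trace = 0) :
    ((A * B - B * A) * C).trace = 2 * (coordMatrix ![A, B, C]).det := by
  rw [det_fin_three, trace_fin_two]
  simp only [coordMatrix, coords, of_apply, Matrix.sub_apply, mul_apply, Fin.sum_univ_two,
    cons_val_zero, cons_val_one, cons_val_two, head_cons, tail_cons,
    apply_one_one_eq_neg hA, apply_one_one_eq_neg hB, apply_one_one_eq_neg hC]
  ring

end Sl2

/-- **Triple product determinant identity for traceless 2×2 matrices.** For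
`A, B, C ∈ 𝔰𝔩(2,ℂ)` one has `(tr([A,B]C))² = -2·det M` where `M` is the 3×3 Gram
matrix of pairwise traces of products. -/
theorem sl2_triple_product_det (A B C : Matrix (Fin 2) (Fin 2) ℂ)
    (hA : A.trace = 0) (hB : B.trace = 0) (hC : C.trace = 0) :
    ((A * B - B * A) * C).trace ^ 2 =
      -2 * Matrix.det !![(A * A).trace, (A * B).trace, (A * C).trace;
                         (B * A).trace, (B * B).trace, (B * C).trace;
                         (C * A).trace, (C * B).trace, (C * C).trace] := by
  have hM : ∀ i, (![A, B, C] i).trace = 0 := by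
    intro i; fin_cases i <;> assumption
  have hgram : !![(A * A).trace, (A * B).trace, (A * C).trace;
                  (B * A).trace, (B * B).trace, (B * C).trace;
                  (C * A).trace, (C * B).trace, (C * C).trace] =
      of fun i j => (![A, B, C] i * ![A, B, C] j).trace := by
    ext i j; fin_cases i <;> fin_cases j <;> rfl
  rw [hgram, Sl2.det_gram _ hM, Sl2.trace_commutator_mul hA hB hC]
  ring
end

section
/- Barnes G-function coefficient ratio: with C(σ) = 1/(G(1-2σ)G(1+2σ)) where G is the Barnes G-function, for every positive integer n one has C(σ+n)C(σ-n)/C(σ)^2 = 1/( ∏_{k=1}^{2n-1} (k^2-4σ^2)^{2(2n-k)} · (4σ^2)^{2n} ). -/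
/-!
Put `P(z) = G(1 - z) G(1 + z)`, so that `C(σ) = 1 / P(2σ)`. The recurrence for `G` gives
`P(z + 1) Γ(-z) = P(z) Γ(1 + z)`, so moving from `P(a + j) P(a - j)` to
`P(a + j + 1) P(a - j - 1)` multiplies by `Γ(1 + a + j) Γ(1 - a + j) / (Γ(a - j) Γ(-a - j))`,
which `Γ(z + 1) = z Γ(z)` turns into the polynomial `-a² ∏_{i=1}^{j} (i² - a²)²`. Taking
`a = 2σ` and multiplying these factors for `j < 2n` gives the product in the theorem.
-/

open Finset Complex

theorem ne_int_of_sub_eq_int {a : ℂ} (ha : ∀ m : ℤ, a ≠ m) {z : ℂ} (k : ℤ) (hz : z - a = k) :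
    ∀ m : ℤ, z ≠ m := fun m h => ha (m - k) (by push_cast; linear_combination h - hz)

theorem ne_int_of_add_eq_int {a : ℂ} (ha : ∀ m : ℤ, a ≠ m) {z : ℂ} (k : ℤ) (hz : z + a = k) :
    ∀ m : ℤ, z ≠ m := fun m h => ha (k - m) (by push_cast; linear_combination hz - h)

theorem Complex.Gamma_ne_zero_of_ne_int {z : ℂ} (hz : ∀ m : ℤ, z ≠ m) : Gamma z ≠ 0 :=
  Gamma_ne_zero fun m => by simpa using hz (-m)

theorem Complex.Gamma_eq_mul_Gamma_of_add_one_eq {z w : ℂ} (hz : ∀ m : ℤ, z ≠ m)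
    (hw : z + 1 = w) : Gamma w = z * Gamma z :=
  hw ▸ Gamma_add_one z (by exact_mod_cast hz 0)

theorem Complex.Gamma_one_add_add_nat_mul_Gamma_one_sub_add_nat {a : ℂ} (ha : ∀ m : ℤ, a ≠ m)
    (m : ℕ) :
    Gamma (1 + a + m) * Gamma (1 - a + m) =
      Gamma (a - m) * Gamma (-a - m) * (-a ^ 2 * ∏ i ∈ Icc 1 m, ((i : ℂ) ^ 2 - a ^ 2) ^ 2) := by
  induction m with
  | zero =>
    have h₁ := Gamma_eq_mul_Gamma_of_add_one_eq ha (w := 1 + a) (by ring)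
    have h₂ := Gamma_eq_mul_Gamma_of_add_one_eq (z := -a)
      (ne_int_of_add_eq_int ha 0 (by simp)) (w := 1 - a) (by ring)
    simp only [CharP.cast_eq_zero, add_zero, sub_zero, Icc_eq_empty_of_lt zero_lt_one,
      prod_empty, h₁, h₂]
    ring
  | succ m ih =>
    have h₁ : Gamma (1 + a + (m + 1)) = (1 + a + m) * Gamma (1 + a + m) :=
      Gamma_eq_mul_Gamma_of_add_one_eq (ne_int_of_sub_eq_int ha (1 + m) (by push_cast; ring))
        (by ring)
    have h₂ : Gamma (1 - a + (m + 1)) = (1 - a + m) * Gamma (1 - a + m) :=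
      Gamma_eq_mul_Gamma_of_add_one_eq (ne_int_of_add_eq_int ha (1 + m) (by push_cast; ring))
        (by ring)
    have h₃ : Gamma (a - m) = (a - (m + 1)) * Gamma (a - (m + 1)) :=
      Gamma_eq_mul_Gamma_of_add_one_eq (ne_int_of_sub_eq_int ha (-m - 1) (by push_cast; ring))
        (by ring)
    have h₄ : Gamma (-a - m) = (-a - (m + 1)) * Gamma (-a - (m + 1)) :=
      Gamma_eq_mul_Gamma_of_add_one_eq (ne_int_of_add_eq_int ha (-m - 1) (by push_cast; ring))
        (by ring)
    rw [h₃, h₄] at ih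
    push_cast
    rw [prod_Icc_succ_top (by omega), h₁, h₂]
    push_cast
    linear_combination (1 + a + m) * (1 - a + m) * ih

def barnesPair (G : ℂ → ℂ) (z : ℂ) : ℂ := G (1 - z) * G (1 + z)

theorem barnesPair_add_one_mul_Gamma {G : ℂ → ℂ} (hG : ∀ z : ℂ, G (z + 1) = Gamma z * G z)
    (z : ℂ) :
    barnesPair G (z + 1) * Gamma (-z) = barnesPair G z * Gamma (1 + z) := by
  simp only [barnesPair]
  rw [show 1 - (z + 1) = -z by ring, show 1 + (z + 1) = 1 + z + 1 by ring, hG,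
    show 1 - z = -z + 1 by ring, hG]
  ring

theorem barnesPair_add_nat_mul_barnesPair_sub_nat {G : ℂ → ℂ}
    (hG : ∀ z : ℂ, G (z + 1) = Gamma z * G z) {a : ℂ} (ha : ∀ m : ℤ, a ≠ m) (m : ℕ) :
    barnesPair G (a + m) * barnesPair G (a - m) =
      barnesPair G a ^ 2 * ∏ j ∈ range m, (-a ^ 2 * ∏ i ∈ Icc 1 j, ((i : ℂ) ^ 2 - a ^ 2) ^ 2) := by
  induction m with
  | zero => simp [sq]
  | succ m ih =>
    have up : barnesPair G (a + (m + 1)) * Gamma (-a - m) =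
        barnesPair G (a + m) * Gamma (1 + a + m) := by
      convert barnesPair_add_one_mul_Gamma hG (a + m) using 3 <;> ring
    have down : barnesPair G (a - m) * Gamma (1 - a + m) =
        barnesPair G (a - (m + 1)) * Gamma (a - m) := by
      convert barnesPair_add_one_mul_Gamma hG (a - (m + 1)) using 3 <;> ring
    have hΓ : Gamma (a - m) * Gamma (-a - m) ≠ 0 := mul_ne_zero
      (Gamma_ne_zero_of_ne_int (ne_int_of_sub_eq_int ha (-m) (by push_cast; ring)))
      (Gamma_ne_zero_of_ne_int (ne_int_of_add_eq_int ha (-m) (by push_cast; ring)))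
    rw [prod_range_succ, ← mul_assoc, ← ih]
    push_cast
    refine mul_right_cancel₀ hΓ ?_
    linear_combination barnesPair G (a - (m + 1)) * Gamma (a - m) * up
      - barnesPair G (a + m) * Gamma (1 + a + m) * down
      + barnesPair G (a + m) * barnesPair G (a - m) *
        Gamma_one_add_add_nat_mul_Gamma_one_sub_add_nat ha m

theorem Finset.prod_range_prod_Icc_eq_prod_Icc_pow {M : Type*} [CommMonoid M] (g : ℕ → M)
    (m : ℕ) : ∏ j ∈ range m, ∏ i ∈ Icc 1 j, g i = ∏ i ∈ Icc 1 (m - 1), g i ^ (m - i) := by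
  rw [prod_comm' (t' := Icc 1 (m - 1)) (s' := fun i => Ico i m)]
  · simp only [prod_const, Nat.card_Ico]
  · intro j i
    simp only [mem_range, mem_Icc, mem_Ico]
    omega

theorem barnesG_coefficient_ratio_general (G : ℂ → ℂ)
    (hG : ∀ z : ℂ, G (z + 1) = Complex.Gamma z * G z)
    (hGne : ∀ z : ℂ, (∀ m : ℤ, z ≠ (m : ℂ)) → G z ≠ 0)
    (σ : ℂ) (hσ : ∀ m : ℤ, 2 * σ ≠ (m : ℂ))
    (C : ℂ → ℂ) (hC : ∀ s : ℂ, C s = 1 / (G (1 - 2 * s) * G (1 + 2 * s)))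
    (n : ℕ) :
    C (σ + n) * C (σ - n) / C σ ^ 2 =
      1 / ((∏ k ∈ Finset.Icc 1 (2 * n - 1),
          ((k : ℂ) ^ 2 - 4 * σ ^ 2) ^ (2 * (2 * n - k))) * (4 * σ ^ 2) ^ (2 * n)) := by
  have hC' (s : ℂ) : C s = (barnesPair G (2 * s))⁻¹ := by rw [hC, one_div, barnesPair]
  have hpair : barnesPair G (2 * σ) ≠ 0 := mul_ne_zero
    (hGne _ (ne_int_of_add_eq_int hσ 1 (by push_cast; ring)))
    (hGne _ (ne_int_of_sub_eq_int hσ 1 (by push_cast; ring)))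
  have hshift := barnesPair_add_nat_mul_barnesPair_sub_nat hG hσ (2 * n)
  rw [prod_mul_distrib, prod_const, card_range, prod_range_prod_Icc_eq_prod_Icc_pow,
    Even.neg_pow (even_two_mul n), show (2 * σ) ^ 2 = 4 * σ ^ 2 by ring] at hshift
  calc C (σ + n) * C (σ - n) / C σ ^ 2
      = barnesPair G (2 * σ) ^ 2 /
          (barnesPair G (2 * σ + (2 * n : ℕ)) * barnesPair G (2 * σ - (2 * n : ℕ))) := by
        simp only [hC', mul_add, mul_sub]
        push_cast
        field_simp
    _ = _ := by
        rw [hshift, div_mul_cancel_left₀ (pow_ne_zero 2 hpair), one_div, mul_comm]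
        simp only [← pow_mul]

/-- **Barnes G-function coefficient ratio.** With `C(σ) = 1/(G(1-2σ)G(1+2σ))`, where `G`
is the Barnes G-function (characterized here by the recurrence `G(z+1) = Γ(z)G(z)` and
nonvanishing away from the integers), for every positive integer `n` and every `σ` with
`2σ ∉ ℤ` one has
`C(σ+n)C(σ-n)/C(σ)² = 1/(∏_{k=1}^{2n-1} (k²-4σ²)^{2(2n-k)} · (4σ²)^{2n})`. -/
theorem barnesG_coefficient_ratio (G : ℂ → ℂ)
    (hG : ∀ z : ℂ, G (z + 1) = Complex.Gamma z * G z)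
    (hGne : ∀ z : ℂ, (∀ m : ℤ, z ≠ (m : ℂ)) → G z ≠ 0)
    (σ : ℂ) (hσ : ∀ m : ℤ, 2 * σ ≠ (m : ℂ))
    (C : ℂ → ℂ) (hC : ∀ s : ℂ, C s = 1 / (G (1 - 2 * s) * G (1 + 2 * s)))
    (n : ℕ) (hn : 0 < n) :
    C (σ + n) * C (σ - n) / C σ ^ 2 =
      1 / ((∏ k ∈ Finset.Icc 1 (2 * n - 1),
          ((k : ℂ) ^ 2 - 4 * σ ^ 2) ^ (2 * (2 * n - k))) * (4 * σ ^ 2) ^ (2 * n)) :=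
  barnesG_coefficient_ratio_general G hG hGne σ hσ C hC n
end

section
/- The normalization constants Ω_n(P) given by Ω_n^2(P) = (-1)^{2n} ∏_{i,j≥1, i+j=4n}(2P+ib+jb^{-1}) / [2^{2n}·2P·∏_{i=1}^{2n-1}(2P+2ib)·∏_{j=1}^{2n-1}(2P+2jb^{-1})] satisfy the recursion Ω_{n+1/2}^2(P)·Ω_{n-1/2}^2(P)/Ω_n^4(P) = ∏_{i,j≥0, i+j=4n-2}(2P+ib+jb^{-1}) · ∏_{i,j≥0, i+j=4n}(2P+Q+ib+jb^{-1}) / ∏_{i≥0,j≥1, i+j=4n}[(2P+ib+jb^{-1})(2P+ib^{-1}+jb)], with Q = b+b^{-1}, together with initial data Ω_0(P)=1, Ω_{1/2}^2(P) = -(Q/2+P)/(2P). -/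
/-!
Write `diagProd x b c n = ∏_{i+j=n, i,j ≥ 0} (x + i b + j c)`. The numerator of the closed formula
for `Ω²_{m/2}` is `diagProd (2P+Q) (2m-2)`, and `diagProd (2P) (2k+2)` is `diagProd (2P+Q) (2k)`
times its two extreme factors `2P + (2k+2) b` and `2P + (2k+2) c`, which are exactly the factors
the denominator gains from `k` to `k + 1`. Hence `Ω²_{(k+1)/2} = ρ_k Ω²_{k/2}` with
`ρ_k = -diagProd (2P+Q) (2k) / (2 diagProd (2P) (2k))`, also for `k = 0` because `Ω₀ = 1`.
The left side of the recursion is `ρ_m / ρ_{m-1}`, and so is the right side once its denominator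
is recognised as `diagProd (2P) (2m) · diagProd (2P+Q) (2m-2)`. These identities hold with `b⁻¹`
replaced by an independent `c`.
-/

open Finset

section DiagProd

variable {R : Type*} [CommRing R] (x b c : R)

def diagProd (n : ℕ) : R :=
  ∏ i ∈ range (n + 1), (x + i * b + (n - i : ℕ) * c)

theorem diagProd_zero : diagProd x b c 0 = x := by
  simp [diagProd]

theorem diagProd_comm (n : ℕ) : diagProd x c b n = diagProd x b c n := by
  rw [diagProd, ← prod_range_reflect]
  refine prod_congr rfl fun i hi => ?_
  have hi : i ≤ n := Nat.lt_succ_iff.mp (mem_range.mp hi)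
  rw [Nat.add_sub_cancel, Nat.sub_sub_self hi]
  ring

theorem prod_range_succ_eq_diagProd (n : ℕ) :
    ∏ i ∈ range (n + 1), (x + i * b + (n + 1 - i : ℕ) * c) = diagProd (x + c) b c n := by
  refine prod_congr rfl fun i hi => ?_
  rw [Nat.sub_add_comm (Nat.lt_succ_iff.mp (mem_range.mp hi))]
  push_cast
  ring

theorem diagProd_succ (n : ℕ) :
    diagProd x b c (n + 1) = diagProd (x + c) b c n * (x + (n + 1) * b) := by
  rw [diagProd, prod_range_succ, prod_range_succ_eq_diagProd, Nat.sub_self]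
  push_cast
  ring

theorem diagProd_succ' (n : ℕ) :
    diagProd x b c (n + 1) = (x + (n + 1) * c) * diagProd (x + b) b c n := by
  rw [← diagProd_comm, diagProd_succ, diagProd_comm]
  ring

theorem diagProd_add_two (n : ℕ) :
    diagProd x b c (n + 2) =
      (x + (n + 2) * c) * diagProd (x + (b + c)) b c n * (x + (n + 2) * b) := by
  rw [diagProd_succ', diagProd_succ, add_assoc]
  push_cast
  ring

theorem prod_Icc_eq_diagProd (n : ℕ) :
    ∏ i ∈ Icc 1 (n + 1), (x + i * b + (n + 2 - i : ℕ) * c) = diagProd (x + (b + c)) b c n := by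
  rw [← Ico_add_one_right_eq_Icc, prod_Ico_eq_prod_range, Nat.add_sub_cancel]
  refine prod_congr rfl fun i hi => ?_
  rw [show n + 2 - (1 + i) = n - i + 1 by have := mem_range.mp hi; omega]
  push_cast
  ring

theorem prod_range_mul_swap_eq_diagProd_mul (n : ℕ) :
    ∏ i ∈ range (n + 2), ((x + i * b + (n + 2 - i : ℕ) * c) * (x + i * c + (n + 2 - i : ℕ) * b)) =
      diagProd x b c (n + 2) * diagProd (x + (b + c)) b c n := by
  rw [prod_mul_distrib, prod_range_succ_eq_diagProd, prod_range_succ_eq_diagProd,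
    diagProd_comm (x + b), diagProd_succ (x + b), diagProd_succ' (x + c), diagProd_add_two,
    add_right_comm x c b, add_assoc x b c]
  ring

variable {x b c}

theorem diagProd_ne_zero [IsDomain R] (h : ∀ i j : ℕ, x + i * b + j * c ≠ 0) (n : ℕ) :
    diagProd x b c n ≠ 0 :=
  prod_ne_zero_iff.mpr fun _ _ => h _ _

theorem diagProd_add_add_ne_zero [IsDomain R] (h : ∀ i j : ℕ, x + i * b + j * c ≠ 0) (n : ℕ) :
    diagProd (x + (b + c)) b c n ≠ 0 :=
  diagProd_ne_zero (fun i j => by convert h (i + 1) (j + 1) using 1; push_cast; ring) n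

end DiagProd

theorem mul_div_sq_eq_div_of_succ_eq_mul {K : Type*} [Field K] {u r : ℕ → K}
    (hu : ∀ k, u (k + 1) = r k * u k) (hu0 : u 0 ≠ 0) (hr : ∀ k, r k ≠ 0) {m : ℕ} (hm : 0 < m) :
    u (m + 1) * u (m - 1) / u m ^ 2 = r m / r (m - 1) := by
  have hne : ∀ k, u k ≠ 0 := fun k => by
    induction k with
    | zero => exact hu0
    | succ k ih => rw [hu]; exact mul_ne_zero (hr k) ih
  obtain ⟨k, rfl⟩ := Nat.exists_eq_add_one.mpr hm
  rw [Nat.add_sub_cancel, hu (k + 1), hu k]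
  field_simp [hne k, hr k]

section Omega

variable {K : Type*} [Field K]

def omegaSq (b c P : K) (m : ℕ) : K :=
  (-1 : K) ^ m *
    (∏ i ∈ Icc 1 (2 * m - 1), (2 * P + (i : K) * b + ((2 * m - i : ℕ) : K) * c)) /
    (2 ^ m * (2 * P) * (∏ i ∈ Icc 1 (m - 1), (2 * P + 2 * (i : K) * b)) *
      (∏ j ∈ Icc 1 (m - 1), (2 * P + 2 * (j : K) * c)))

def omegaRatio (b c P : K) (k : ℕ) : K :=
  -diagProd (2 * P + (b + c)) b c (2 * k) / (2 * diagProd (2 * P) b c (2 * k))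

variable {b c P : K}

theorem omegaSq_one : omegaSq b c P 1 = omegaRatio b c P 0 := by
  simp only [omegaSq, omegaRatio, pow_one, mul_one, mul_zero, Nat.add_one_sub_one, Icc_self,
    prod_singleton, Nat.cast_one, one_mul, tsub_self, Order.lt_one_iff, Icc_eq_empty_of_lt,
    prod_empty, diagProd_zero]
  ring

theorem omegaRatio_zero (h2P : 2 * P ≠ 0) :
    omegaRatio b c P 0 = -(((b + c) / 2 + P) / (2 * P)) := by
  simp only [omegaRatio, mul_zero, diagProd_zero]
  field_simp [left_ne_zero_of_mul h2P]
  ring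

theorem omegaSq_succ (k : ℕ) :
    omegaSq b c P (k + 1) = (-1) ^ (k + 1) * diagProd (2 * P + (b + c)) b c (2 * k) /
      (2 ^ (k + 1) * (2 * P) * (∏ i ∈ Icc 1 k, (2 * P + 2 * (i : K) * b)) *
        (∏ j ∈ Icc 1 k, (2 * P + 2 * (j : K) * c))) := by
  rw [omegaSq, show 2 * (k + 1) - 1 = 2 * k + 1 by omega, show 2 * (k + 1) = 2 * k + 2 by ring,
    prod_Icc_eq_diagProd, Nat.add_sub_cancel]

theorem omegaSq_add_two {k : ℕ} (hA : diagProd (2 * P + (b + c)) b c (2 * k) ≠ 0) :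
    omegaSq b c P (k + 2) = omegaRatio b c P (k + 1) * omegaSq b c P (k + 1) := by
  rw [omegaRatio, omegaSq_succ, omegaSq_succ, prod_Icc_succ_top (by omega),
    prod_Icc_succ_top (by omega), show 2 * (k + 1) = 2 * k + 2 by ring,
    diagProd_add_two (2 * P) b c (2 * k)]
  push_cast
  field_simp
  ring

theorem omegaRatio_ne_zero (hgen : ∀ i j : ℕ, 2 * P + i * b + j * c ≠ 0) (k : ℕ) :
    omegaRatio b c P k ≠ 0 := by
  have h2 : (2 : K) ≠ 0 := left_ne_zero_of_mul (by simpa using hgen 0 0)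
  exact div_ne_zero (neg_ne_zero.mpr (diagProd_add_add_ne_zero hgen _))
    (mul_ne_zero h2 (diagProd_ne_zero hgen _))

theorem omegaRatio_div_pred (h2 : (2 : K) ≠ 0) {m : ℕ} (hm : 0 < m) :
    omegaRatio b c P m / omegaRatio b c P (m - 1) =
      ((∏ i ∈ range (2 * m - 1), (2 * P + (i : K) * b + ((2 * m - 2 - i : ℕ) : K) * c)) *
          ∏ i ∈ range (2 * m + 1), (2 * P + (b + c) + (i : K) * b + ((2 * m - i : ℕ) : K) * c)) /
        ∏ i ∈ range (2 * m),
          ((2 * P + (i : K) * b + ((2 * m - i : ℕ) : K) * c) *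
            (2 * P + (i : K) * c + ((2 * m - i : ℕ) : K) * b)) := by
  obtain ⟨k, rfl⟩ := Nat.exists_eq_add_one.mpr hm
  rw [omegaRatio, omegaRatio, Nat.add_sub_cancel, show 2 * (k + 1) - 1 = 2 * k + 1 by omega,
    show 2 * (k + 1) - 2 = 2 * k by omega, show 2 * (k + 1) = 2 * k + 2 by ring,
    prod_range_mul_swap_eq_diagProd_mul]
  unfold diagProd
  field_simp

end Omega

/-- `Ω2 m` stands for `Ω²_{m/2}(P)`. -/
theorem omega_closed_formula_satisfies_recursion_general (b P : ℂ)
    (hgen : ∀ i j : ℕ, 2 * P + (i : ℂ) * b + (j : ℂ) * b⁻¹ ≠ 0)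
    (Ω2 : ℕ → ℂ)
    (hΩ0 : Ω2 0 = 1)
    (hΩ : ∀ m : ℕ, 0 < m → Ω2 m =
      (-1 : ℂ) ^ m *
        (∏ i ∈ Finset.Icc 1 (2 * m - 1), (2 * P + (i : ℂ) * b + ((2 * m - i : ℕ) : ℂ) * b⁻¹)) /
        (2 ^ m * (2 * P) * (∏ i ∈ Finset.Icc 1 (m - 1), (2 * P + 2 * (i : ℂ) * b)) *
          (∏ j ∈ Finset.Icc 1 (m - 1), (2 * P + 2 * (j : ℂ) * b⁻¹)))) :
    Ω2 1 = -(((b + b⁻¹) / 2 + P) / (2 * P)) ∧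
    ∀ m : ℕ, 0 < m →
      Ω2 (m + 1) * Ω2 (m - 1) / Ω2 m ^ 2 =
        ((∏ i ∈ Finset.range (2 * m - 1),
            (2 * P + (i : ℂ) * b + ((2 * m - 2 - i : ℕ) : ℂ) * b⁻¹)) *
          ∏ i ∈ Finset.range (2 * m + 1),
            (2 * P + (b + b⁻¹) + (i : ℂ) * b + ((2 * m - i : ℕ) : ℂ) * b⁻¹)) /
        ∏ i ∈ Finset.range (2 * m),
          ((2 * P + (i : ℂ) * b + ((2 * m - i : ℕ) : ℂ) * b⁻¹) *
            (2 * P + (i : ℂ) * b⁻¹ + ((2 * m - i : ℕ) : ℂ) * b)) := by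
  have hΩsucc : ∀ k, Ω2 (k + 1) = omegaRatio b b⁻¹ P k * Ω2 k := by
    rintro (_ | k)
    · rw [hΩ0, mul_one, hΩ 1 one_pos]
      exact omegaSq_one
    · rw [hΩ (k + 2) (by omega), hΩ (k + 1) (by omega)]
      exact omegaSq_add_two (diagProd_add_add_ne_zero hgen _)
  refine ⟨?_, fun m hm => ?_⟩
  · rw [hΩsucc 0, hΩ0, mul_one]
    exact omegaRatio_zero (by simpa using hgen 0 0)
  · rw [mul_div_sq_eq_div_of_succ_eq_mul hΩsucc (hΩ0 ▸ one_ne_zero) (omegaRatio_ne_zero hgen) hm]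
    exact omegaRatio_div_pred two_ne_zero hm

/-- **Recursion for the normalization constants `Ωₙ(P)`.** Index half-integers `n` by
`m = 2n ∈ ℕ` and write `Ω2 m = Ω²_{m/2}(P)`. The closed formula
`Ωₙ²(P) = (-1)^{2n} ∏_{i,j≥1, i+j=4n}(2P+ib+jb⁻¹) /
  [2^{2n}·2P·∏_{i=1}^{2n-1}(2P+2ib)·∏_{j=1}^{2n-1}(2P+2jb⁻¹)]` (for `n > 0`),
together with the initial data `Ω₀ = 1`, satisfies
`Ω²_{1/2}(P) = -(Q/2+P)/(2P)` and, for every `n ≥ 1/2` (`m ≥ 1`), the recursion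
`Ω²_{n+1/2}·Ω²_{n-1/2}/Ω⁴_n = ∏_{i,j≥0, i+j=4n-2}(2P+ib+jb⁻¹) ·
  ∏_{i,j≥0, i+j=4n}(2P+Q+ib+jb⁻¹) / ∏_{i≥0,j≥1, i+j=4n}[(2P+ib+jb⁻¹)(2P+ib⁻¹+jb)]`,
with `Q = b+b⁻¹`. -/
theorem omega_closed_formula_satisfies_recursion (b P : ℂ) (hb : b ≠ 0)
    (hgen : ∀ i j : ℕ, 2 * P + (i : ℂ) * b + (j : ℂ) * b⁻¹ ≠ 0)
    (Ω2 : ℕ → ℂ)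
    (hΩ0 : Ω2 0 = 1)
    (hΩ : ∀ m : ℕ, 0 < m → Ω2 m =
      (-1 : ℂ) ^ m *
        (∏ i ∈ Finset.Icc 1 (2 * m - 1), (2 * P + (i : ℂ) * b + ((2 * m - i : ℕ) : ℂ) * b⁻¹)) /
        (2 ^ m * (2 * P) * (∏ i ∈ Finset.Icc 1 (m - 1), (2 * P + 2 * (i : ℂ) * b)) *
          (∏ j ∈ Finset.Icc 1 (m - 1), (2 * P + 2 * (j : ℂ) * b⁻¹)))) :
    Ω2 1 = -(((b + b⁻¹) / 2 + P) / (2 * P)) ∧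
    ∀ m : ℕ, 0 < m →
      Ω2 (m + 1) * Ω2 (m - 1) / Ω2 m ^ 2 =
        ((∏ i ∈ Finset.range (2 * m - 1),
            (2 * P + (i : ℂ) * b + ((2 * m - 2 - i : ℕ) : ℂ) * b⁻¹)) *
          ∏ i ∈ Finset.range (2 * m + 1),
            (2 * P + (b + b⁻¹) + (i : ℂ) * b + ((2 * m - i : ℕ) : ℂ) * b⁻¹)) /
        ∏ i ∈ Finset.range (2 * m),
          ((2 * P + (i : ℂ) * b + ((2 * m - i : ℕ) : ℂ) * b⁻¹) *
            (2 * P + (i : ℂ) * b⁻¹ + ((2 * m - i : ℕ) : ℂ) * b)) :=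
  omega_closed_formula_satisfies_recursion_general b P hgen Ω2 hΩ0 hΩ
end
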